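/- arXiv:2204.10359 — 2 statements merged into one kernel-verified Lean document; each statement's English description precedes it below -/
import Mathlib

section
/- Let h > 0, let 𝔠 > 0, and let 𝒢 = { z' ↦ g_z((z' − z)/h) : z ∈ [0,1]^d } be a class of functions on ℝ^d satisfying: (i) sup_z sup_{z'} |g_z(z')| ≤ 𝔠; (ii) each g_z is supported in [−𝔠, 𝔠]^d; (iii) sup_z |g_z(z') − g_z(z'')| ≤ 𝔠 |z' − z''| and sup_w |g_{z'}(w) − g_{z''}(w)| ≤ 𝔠 h⁻¹ |z' − z''|. Then for every probability measure P on [0,1]^d and every ε ∈ (0,1], the L¹(P)-covering number satisfies N((2𝔠+1)^{d+1} ε, 𝒢, L¹(P)) ≤ 𝔠' ε^{−(d+1)} + 1, where 𝔠' depends only on 𝔠 and d. -/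
/-!
Put the centres on the grid `δℤ^d` with `δ = εh`. By the two Lipschitz conditions every kernel
of the class is within `2𝔠ε` in sup norm of the kernel centred at a nearest grid point `c`, and
it vanishes outside the ball of radius `r = 𝔠h + δ` around `c`. If that ball has `P`-mass `< ε`,
the kernel has `L¹(P)`-norm `≤ 𝔠ε` and is approximated by `0`. The balls of mass `≥ ε` are few:
each point lies in at most `(2r/δ + 1)^d ≤ ((2𝔠+3)/ε)^d` of them, so summing their masses
leaves at most `(2𝔠+3)^d / ε^(d+1)` heavy cells, independently of `h`.
-/

open MeasureTheory

open Finset Metric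

section Grid

variable {d : ℕ}

def gridPoint (δ : ℝ) (c : Fin d → ℤ) : Fin d → ℝ := fun i => c i * δ

lemma exists_mem_Icc_dist_gridPoint_le {z : Fin d → ℝ} (hz : z ∈ Set.Icc 0 1) {δ : ℝ}
    (hδ : 0 < δ) :
    ∃ c ∈ Icc (0 : Fin d → ℤ) (fun _ => ⌈1 / δ⌉), dist z (gridPoint δ c) ≤ δ := by
  refine ⟨fun i => ⌊z i / δ⌋, mem_Icc.2 ⟨fun i => ?_, fun i => ?_⟩, ?_⟩
  · exact Int.floor_nonneg.2 (div_nonneg (hz.1 i) hδ.le)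
  · exact (Int.floor_le_ceil _).trans
      (Int.ceil_mono (div_le_div_of_nonneg_right (hz.2 i) hδ.le))
  · refine (dist_pi_le_iff hδ.le).2 fun i => ?_
    have hfract : z i - ⌊z i / δ⌋ * δ = Int.fract (z i / δ) * δ := by
      rw [Int.fract, sub_mul, div_mul_cancel₀ _ hδ.ne']
    rw [gridPoint, Real.dist_eq, hfract,
      abs_of_nonneg (mul_nonneg (Int.fract_nonneg _) hδ.le)]
    exact mul_le_of_le_one_left hδ.le (Int.fract_lt_one _).le

lemma card_Icc_ceil_floor_le {a b : ℝ} (hab : a ≤ b) : (#(Icc ⌈a⌉ ⌊b⌋) : ℝ) ≤ b - a + 1 := by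
  rw [Int.card_Icc]
  rcases le_or_gt (⌊b⌋ + 1 - ⌈a⌉) 0 with hneg | hpos
  · rw [Int.toNat_of_nonpos hneg]
    norm_num
    linarith
  · rw [← Int.cast_natCast, Int.toNat_of_nonneg hpos.le]
    push_cast
    linarith [Int.floor_le b, Int.le_ceil a]

open Classical in
lemma card_filter_mem_closedBall_gridPoint_le (S : Finset (Fin d → ℤ)) (w : Fin d → ℝ)
    {δ r : ℝ} (hδ : 0 < δ) (hr : 0 ≤ r) :
    (#{c ∈ S | w ∈ closedBall (gridPoint δ c) r} : ℝ) ≤ (2 * (r / δ) + 1) ^ d := by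
  have hsub : {c ∈ S | w ∈ closedBall (gridPoint δ c) r} ⊆
      Icc (fun i => ⌈(w i - r) / δ⌉) (fun i => ⌊(w i + r) / δ⌋) := by
    intro c hc
    have hcoord i := abs_le.1 <| Real.dist_eq _ _ ▸
      (dist_le_pi_dist w (gridPoint δ c) i).trans (mem_closedBall.1 (mem_filter.1 hc).2)
    refine mem_Icc.2 ⟨fun i => Int.ceil_le.2 ?_, fun i => Int.le_floor.2 ?_⟩
    · rw [div_le_iff₀ hδ]
      linarith [hcoord i, show gridPoint δ c i = c i * δ from rfl]
    · rw [le_div_iff₀ hδ]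
      linarith [hcoord i, show gridPoint δ c i = c i * δ from rfl]
  calc (#{c ∈ S | w ∈ closedBall (gridPoint δ c) r} : ℝ)
      ≤ ∏ i, (#(Icc ⌈(w i - r) / δ⌉ ⌊(w i + r) / δ⌋) : ℝ) := by
        rw [← Nat.cast_prod, ← Pi.card_Icc]
        exact_mod_cast card_le_card hsub
    _ ≤ ∏ i, ((w i + r) / δ - (w i - r) / δ + 1) :=
        prod_le_prod (fun _ _ => by positivity) fun i _ =>
          card_Icc_ceil_floor_le (by gcongr; linarith)
    _ = (2 * (r / δ) + 1) ^ d := by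
        rw [← Fin.prod_const]
        exact prod_congr rfl fun _ _ => by ring

end Grid

section FiniteMeasure

variable {X ι : Type*} [MeasurableSpace X] (μ : Measure X) [IsFiniteMeasure μ]

open Classical in
lemma sum_measureReal_le_of_card_filter_mem_le (S : Finset ι) {A : ι → Set X}
    (hA : ∀ c, MeasurableSet (A c)) {K : ℝ} (hK : ∀ w, (#{c ∈ S | w ∈ A c} : ℝ) ≤ K) :
    ∑ c ∈ S, μ.real (A c) ≤ K * μ.real Set.univ := by
  calc ∑ c ∈ S, μ.real (A c) = ∫ w, (#{c ∈ S | w ∈ A c} : ℝ) ∂μ := by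
        simp_rw [← integral_indicator_one (hA _), card_filter]
        rw [← integral_finsetSum _ fun c _ => (integrable_const 1).indicator (hA c)]
        push_cast
        simp only [Set.indicator_apply, Pi.one_apply]
    _ ≤ ‖∫ w, (#{c ∈ S | w ∈ A c} : ℝ) ∂μ‖ := le_abs_self _
    _ ≤ K * μ.real Set.univ :=
        norm_integral_le_of_norm_le_const (.of_forall fun w => by simpa using hK w)

open Classical in
lemma card_filter_le_measureReal_mul_le (S : Finset ι) {A : ι → Set X}
    (hA : ∀ c, MeasurableSet (A c)) {K : ℝ} (hK : ∀ w, (#{c ∈ S | w ∈ A c} : ℝ) ≤ K)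
    (ε : ℝ) :
    (#{c ∈ S | ε ≤ μ.real (A c)} : ℝ) * ε ≤ K * μ.real Set.univ :=
  calc (#{c ∈ S | ε ≤ μ.real (A c)} : ℝ) * ε = #{c ∈ S | ε ≤ μ.real (A c)} • ε := by
        rw [nsmul_eq_mul]
    _ ≤ ∑ c ∈ S with ε ≤ μ.real (A c), μ.real (A c) :=
        card_nsmul_le_sum _ _ _ fun _ hc => (mem_filter.1 hc).2
    _ ≤ ∑ c ∈ S, μ.real (A c) :=
        sum_le_sum_of_subset_of_nonneg (filter_subset _ _) fun _ _ _ => measureReal_nonneg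
    _ ≤ K * μ.real Set.univ := sum_measureReal_le_of_card_filter_mem_le μ S hA hK

lemma integral_abs_le_mul_measureReal_of_eq_zero_off {F : X → ℝ} {s : Set X} {M : ℝ}
    (hF : ∀ w ∉ s, F w = 0) (hM : ∀ w, |F w| ≤ M) : ∫ w, |F w| ∂μ ≤ M * μ.real s := by
  rw [← setIntegral_eq_integral_of_forall_compl_eq_zero fun w hw => by simp [hF w hw]]
  exact (le_abs_self _).trans
    (norm_setIntegral_le_of_norm_le_const (f := fun w => |F w|) (measure_lt_top μ s)
      fun w _ => by simpa using hM w)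

end FiniteMeasure

open Classical in
lemma exists_mem_insert_image_integral_abs_sub_le {X ι : Type*} [MeasurableSpace X]
    (μ : Measure X) [IsProbabilityMeasure μ] {S : Finset ι} {A : ι → Set X}
    (F : ι → X → ℝ)
    {f : X → ℝ} {c : ι} (hc : c ∈ S) {η M : ℝ} (hfc : ∀ w, |f w - F c w| ≤ η)
    (hf_supp : ∀ w ∉ A c, f w = 0) (hf_bd : ∀ w, |f w| ≤ M) (ε : ℝ) :
    ∃ φ ∈ insert 0 ({c ∈ S | ε ≤ μ.real (A c)}.image F),
      ∫ w, |f w - φ w| ∂μ ≤ max η (M * ε) := by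
  by_cases hheavy : ε ≤ μ.real (A c)
  · refine ⟨F c, mem_insert_of_mem (mem_image_of_mem F (mem_filter.2 ⟨hc, hheavy⟩)), ?_⟩
    calc ∫ w, |f w - F c w| ∂μ ≤ η * μ.real Set.univ :=
          integral_abs_le_mul_measureReal_of_eq_zero_off μ
            (fun w hw => (hw (Set.mem_univ w)).elim) hfc
      _ ≤ max η (M * ε) := by simp
  · refine ⟨0, mem_insert_self _ _, ?_⟩
    obtain ⟨x⟩ := nonempty_of_isProbabilityMeasure μ
    calc ∫ w, |f w - (0 : X → ℝ) w| ∂μ ≤ M * μ.real (A c) :=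
          integral_abs_le_mul_measureReal_of_eq_zero_off μ (by simpa using hf_supp)
            (by simpa using hf_bd)
      _ ≤ M * ε := by gcongr; exacts [(abs_nonneg _).trans (hf_bd x), (not_le.1 hheavy).le]
      _ ≤ max η (M * ε) := le_max_right _ _

lemma card_heavy_gridCells_le {d : ℕ} (μ : Measure (Fin d → ℝ)) [IsProbabilityMeasure μ]
    (S : Finset (Fin d → ℤ)) {R h ε : ℝ} (hR : 0 ≤ R) (hh : 0 < h) (hε : 0 < ε)
    (hε1 : ε ≤ 1) :
    (#{c ∈ S | ε ≤ μ.real (closedBall (gridPoint (ε * h) c) (R * h + ε * h))} : ℝ)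
      ≤ (2 * R + 3) ^ d / ε ^ (d + 1) := by
  have hratio : 2 * ((R * h + ε * h) / (ε * h)) + 1 ≤ (2 * R + 3) / ε := by
    rw [le_div_iff₀ hε, show (R * h + ε * h) / (ε * h) = R / ε + 1 by field_simp]
    nlinarith [div_mul_cancel₀ R hε.ne']
  have hcount := card_filter_le_measureReal_mul_le μ S (fun _ => measurableSet_closedBall)
    (fun w => (card_filter_mem_closedBall_gridPoint_le S w (by positivity) (by positivity)).trans
      (pow_le_pow_left₀ (by positivity) hratio d)) ε
  rw [probReal_univ, mul_one, div_pow, le_div_iff₀ (by positivity)] at hcount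
  rw [le_div_iff₀ (by positivity), pow_succ', ← mul_assoc]
  exact hcount

section Kernel

variable {E : Type*} [NormedAddCommGroup E] [NormedSpace ℝ E] {g : E → E → ℝ} {h : ℝ}

lemma abs_sub_rescaled_le (hh : 0 < h) {z z' : E} {L M : ℝ}
    (hL : ∀ a b, |g z a - g z b| ≤ L * dist a b) (hM : ∀ w, |g z w - g z' w| ≤ M * dist z z')
    (w : E) : |g z (h⁻¹ • (w - z)) - g z' (h⁻¹ • (w - z'))| ≤ (L / h + M) * dist z z' := by
  have hdist : dist (h⁻¹ • (w - z)) (h⁻¹ • (w - z')) = h⁻¹ * dist z z' := by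
    rw [dist_smul₀, dist_sub_left, Real.norm_eq_abs, abs_of_pos (inv_pos.2 hh)]
  calc |g z (h⁻¹ • (w - z)) - g z' (h⁻¹ • (w - z'))|
      ≤ |g z (h⁻¹ • (w - z)) - g z (h⁻¹ • (w - z'))|
        + |g z (h⁻¹ • (w - z')) - g z' (h⁻¹ • (w - z'))| := abs_sub_le _ _ _
    _ ≤ L * (h⁻¹ * dist z z') + M * dist z z' := hdist ▸ add_le_add (hL _ _) (hM _)
    _ = (L / h + M) * dist z z' := by ring

lemma rescaled_eq_zero_of_mul_lt_dist (hh : 0 < h) {z w : E} {R : ℝ}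
    (hsupp : ∀ v ∉ closedBall 0 R, g z v = 0) (hw : R * h < dist w z) :
    g z (h⁻¹ • (w - z)) = 0 := by
  refine hsupp _ fun hv => hw.not_ge ?_
  rwa [mem_closedBall_zero_iff, norm_smul, norm_inv, Real.norm_of_nonneg hh.le, ← dist_eq_norm,
    inv_mul_le_iff₀ hh, mul_comm] at hv

end Kernel

lemma Icc_neg_const_eq_closedBall_zero {d : ℕ} {R : ℝ} (hR : 0 ≤ R) :
    Set.Icc (fun _ => -R : Fin d → ℝ) (fun _ => R) = closedBall 0 R := by
  rw [closedBall_pi _ hR, ← Set.pi_univ_Icc]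
  simp [Real.closedBall_zero_eq_Icc]

theorem covering_number_of_kernel_class_general
    (d : ℕ) (𝔠 : ℝ) (h𝔠 : 0 < 𝔠) :
    ∃ 𝔠' : ℝ, 0 < 𝔠' ∧
      ∀ (h : ℝ), 0 < h →
      ∀ (g : (Fin d → ℝ) → (Fin d → ℝ) → ℝ),
        (∀ z z', |g z z'| ≤ 𝔠) →
        (∀ z z', z' ∉ Set.Icc (fun _ => -𝔠 : Fin d → ℝ) (fun _ => 𝔠) → g z z' = 0) →
        (∀ z z' z'', |g z z' - g z z''| ≤ 𝔠 * dist z' z'') →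
        (∀ z' z'' w, |g z' w - g z'' w| ≤ 𝔠 / h * dist z' z'') →
      ∀ (P : Measure (Fin d → ℝ)), IsProbabilityMeasure P →
        P (Set.Icc (0 : Fin d → ℝ) 1) = 1 →
      ∀ ε : ℝ, 0 < ε → ε ≤ 1 →
      ∃ T : Finset ((Fin d → ℝ) → ℝ),
        (T.card : ℝ) ≤ 𝔠' / ε ^ (d + 1) + 1 ∧
        ∀ z ∈ Set.Icc (0 : Fin d → ℝ) 1, ∃ f ∈ T,
          (∫ w, |g z (h⁻¹ • (w - z)) - f w| ∂P) ≤ (2 * 𝔠 + 1) ^ (d + 1) * ε := by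
  classical
  refine ⟨(2 * 𝔠 + 3) ^ d, by positivity,
    fun h hh g hg_bd hg_supp hg_lip hg_lip_center P _ _ ε hε hε1 => ?_⟩
  let F (c : Fin d → ℤ) (w : Fin d → ℝ) : ℝ :=
    g (gridPoint (ε * h) c) (h⁻¹ • (w - gridPoint (ε * h) c))
  let H := {c ∈ Icc (0 : Fin d → ℤ) (fun _ => ⌈1 / (ε * h)⌉) |
    ε ≤ P.real (closedBall (gridPoint (ε * h) c) (𝔠 * h + ε * h))}
  refine ⟨insert 0 (H.image F), ?_, fun z hz => ?_⟩
  · calc (#(insert 0 (H.image F)) : ℝ) ≤ #H + 1 := by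
          exact_mod_cast (card_insert_le _ _).trans (Nat.add_le_add_right card_image_le 1)
      _ ≤ (2 * 𝔠 + 3) ^ d / ε ^ (d + 1) + 1 := by
          gcongr
          exact card_heavy_gridCells_le P _ h𝔠.le hh hε hε1
  obtain ⟨c, hcB, hzc⟩ := exists_mem_Icc_dist_gridPoint_le hz (by positivity : 0 < ε * h)
  have happrox (w) : |g z (h⁻¹ • (w - z)) - F c w| ≤ 2 * 𝔠 * ε :=
    calc _ ≤ (𝔠 / h + 𝔠 / h) * dist z (gridPoint (ε * h) c) :=
          abs_sub_rescaled_le hh (hg_lip z) (fun w => hg_lip_center z _ w) w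
      _ ≤ (𝔠 / h + 𝔠 / h) * (ε * h) := by gcongr
      _ = 2 * 𝔠 * ε := by field_simp; ring
  have hvanish (w) (hw : w ∉ closedBall (gridPoint (ε * h) c) (𝔠 * h + ε * h)) :
      g z (h⁻¹ • (w - z)) = 0 :=
    rescaled_eq_zero_of_mul_lt_dist hh
      (fun v hv => hg_supp z v (by rwa [Icc_neg_const_eq_closedBall_zero h𝔠.le]))
      (by linarith [dist_triangle w z (gridPoint (ε * h) c), not_le.1 (mem_closedBall.not.1 hw)])
  obtain ⟨φ, hφ, hint⟩ := exists_mem_insert_image_integral_abs_sub_le P F hcB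
    (A := fun c => closedBall (gridPoint (ε * h) c) (𝔠 * h + ε * h)) happrox hvanish
    (fun w => hg_bd z _) ε
  have hconst : (2 * 𝔠 + 1) * ε ≤ (2 * 𝔠 + 1) ^ (d + 1) * ε := by
    gcongr; exact le_self_pow₀ (by linarith) d.succ_ne_zero
  exact ⟨φ, hφ, hint.trans (max_le (by linarith) (by linarith [mul_pos h𝔠 hε]))⟩

/-- Uniform `L¹(P)`-covering number bound `N((2𝔠+1)^{d+1}ε, 𝒢, L¹(P))
≤ 𝔠' ε^{−(d+1)} + 1` for the class `𝒢 = {z' ↦ g_z((z'−z)/h) : z ∈ [0,1]^d}` of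
bounded, compactly supported, Lipschitz kernels of possibly varying shapes. -/
theorem covering_number_of_kernel_class
    (d : ℕ) (hd : 1 ≤ d) (𝔠 : ℝ) (h𝔠 : 0 < 𝔠) :
    ∃ 𝔠' : ℝ, 0 < 𝔠' ∧
      ∀ (h : ℝ), 0 < h →
      ∀ (g : (Fin d → ℝ) → (Fin d → ℝ) → ℝ),
        (∀ z z', |g z z'| ≤ 𝔠) →
        (∀ z z', z' ∉ Set.Icc (fun _ => -𝔠 : Fin d → ℝ) (fun _ => 𝔠) → g z z' = 0) →
        (∀ z z' z'', |g z z' - g z z''| ≤ 𝔠 * dist z' z'') →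
        (∀ z' z'' w, |g z' w - g z'' w| ≤ 𝔠 / h * dist z' z'') →
      ∀ (P : Measure (Fin d → ℝ)), IsProbabilityMeasure P →
        P (Set.Icc (0 : Fin d → ℝ) 1) = 1 →
      ∀ ε : ℝ, 0 < ε → ε ≤ 1 →
      ∃ T : Finset ((Fin d → ℝ) → ℝ),
        (T.card : ℝ) ≤ 𝔠' / ε ^ (d + 1) + 1 ∧
        ∀ z ∈ Set.Icc (0 : Fin d → ℝ) 1, ∃ f ∈ T,
          (∫ w, |g z (h⁻¹ • (w - z)) - f w| ∂P) ≤ (2 * 𝔠 + 1) ^ (d + 1) * ε :=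
  covering_number_of_kernel_class_general d 𝔠 h𝔠
end

section
/- Under the setting of the previous statement (S_y invertible with ‖S_y⁻¹‖ ≤ C₁, g bounded by C₂, K bounded by C₃ and supported in [−1,1]), the map a ↦ I(a) = ∫_{(𝒴−y)/h} 1(a ≤ y+hv) p(v) K(v) g(y+hv) dv is Lipschitz continuous: |I(a) − I(a′)| ≤ C h⁻¹ |a − a′|, where C depends only on C₂, C₃, p, and in particular not on h or y. -/
open MeasureTheory

/-!
For `a ≤ a'` the integrands of `I a` and `I a'` differ only where `a ≤ y + h v < a'`, that is on
an interval of length `(a' - a) / h`. There the remaining factor `v ^ j / j! * K v * g (y + h v)`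
is bounded by `C₂ * C₃`, because `K` vanishes off `[-1, 1]`, where `|v ^ j / j!| ≤ 1`.
-/

lemma abs_pow_div_factorial_le_one {v : ℝ} (hv : |v| ≤ 1) (k : ℕ) :
    |v ^ k / k.factorial| ≤ 1 := by
  rw [abs_div, abs_pow, Nat.abs_cast, div_le_one (by positivity)]
  exact (pow_le_one₀ (abs_nonneg v) hv).trans (mod_cast k.factorial_pos)

lemma abs_pow_div_factorial_mul_mul_le {K G : ℝ → ℝ} {C₂ C₃ : ℝ} (hG : ∀ v, |G v| ≤ C₂)
    (hK : ∀ v, |K v| ≤ C₃) (hK_supp : ∀ v, v ∉ Set.Icc (-1 : ℝ) 1 → K v = 0) (k : ℕ) (v : ℝ) :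
    |v ^ k / k.factorial * K v * G v| ≤ C₂ * C₃ := by
  by_cases hv : v ∈ Set.Icc (-1 : ℝ) 1
  · have hC₃ : 0 ≤ C₃ := (abs_nonneg _).trans (hK 0)
    calc |v ^ k / k.factorial * K v * G v| = |v ^ k / k.factorial| * |K v| * |G v| := by
          rw [abs_mul, abs_mul]
      _ ≤ 1 * C₃ * C₂ := by
          gcongr
          exacts [abs_pow_div_factorial_le_one (abs_le.2 hv) k, hK v, hG v]
      _ = C₂ * C₃ := by ring
  · rw [hK_supp v hv, mul_zero, zero_mul, abs_zero]
    exact mul_nonneg ((abs_nonneg _).trans (hG 0)) ((abs_nonneg _).trans (hK 0))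

lemma setOf_le_diff_setOf_le_eq_Ico {y h : ℝ} (hh : 0 < h) (a a' : ℝ) :
    {v : ℝ | a ≤ y + h * v} \ {v | a' ≤ y + h * v} = Set.Ico ((a - y) / h) ((a' - y) / h) := by
  ext v
  simp only [Set.mem_sdiff, Set.mem_ofPred_eq, Set.mem_Ico, not_le, div_le_iff₀ hh,
    lt_div_iff₀ hh]
  constructor <;> rintro ⟨h₁, h₂⟩ <;> constructor <;> linarith

theorem abs_setIntegral_ite_mul_sub_le {φ : ℝ → ℝ} {D : Set ℝ} {M y h : ℝ} (hh : 0 < h)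
    (hφ : IntegrableOn φ D) (hM : ∀ v, |φ v| ≤ M) (a a' : ℝ) :
    |(∫ v in D, (if a ≤ y + h * v then 1 else 0) * φ v) -
      ∫ v in D, (if a' ≤ y + h * v then 1 else 0) * φ v| ≤ M / h * |a - a'| := by
  wlog haa' : a ≤ a' generalizing a a'
  · rw [abs_sub_comm, abs_sub_comm a]
    exact this a' a (le_of_not_ge haa')
  have hcut : ∀ b, (fun v => (if b ≤ y + h * v then 1 else 0) * φ v) =
      {v | b ≤ y + h * v}.indicator φ := fun b => by
    ext v
    simp only [Set.indicator_apply, Set.mem_ofPred_eq, ite_mul, one_mul, zero_mul]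
  have hmeas : ∀ b, MeasurableSet {v : ℝ | b ≤ y + h * v} := fun b =>
    measurableSet_le measurable_const (by fun_prop)
  have hsub : {v : ℝ | a' ≤ y + h * v} ⊆ {v | a ≤ y + h * v} := fun v hv =>
    haa'.trans hv
  set A := Set.Ico ((a - y) / h) ((a' - y) / h)
  have hvol : volume.real A = (a' - a) / h := by
    rw [Real.volume_real_Ico, ← sub_div, sub_sub_sub_cancel_right,
      max_eq_left (div_nonneg (sub_nonneg.2 haa') hh.le)]
  calc _ = |∫ v in D ∩ A, φ v| := by
        rw [hcut, hcut, ← integral_sub (hφ.indicator (hmeas a)) (hφ.indicator (hmeas a')),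
          ← Pi.sub_def, ← Set.indicator_sdiff hsub, setOf_le_diff_setOf_le_eq_Ico hh,
          setIntegral_indicator measurableSet_Ico]
    _ ≤ M * volume.real (D ∩ A) := by
        rw [← Real.norm_eq_abs]
        exact norm_setIntegral_le_of_norm_le_const
          ((measure_mono Set.inter_subset_right).trans_lt measure_Ico_lt_top)
          (fun v _ => (Real.norm_eq_abs _).trans_le (hM v))
    _ ≤ M * volume.real A :=
        mul_le_mul_of_nonneg_left
          (measureReal_mono Set.inter_subset_right measure_Ico_lt_top.ne)
          ((abs_nonneg _).trans (hM 0))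
    _ = M / h * |a - a'| := by
        rw [hvol, abs_sub_comm, abs_of_nonneg (sub_nonneg.2 haa')]
        ring

/-- The map `a ↦ I(a) = ∫_{(𝒴−y)/h} 1(a ≤ y+hv) p(v)K(v)g(y+hv) dv`
is Lipschitz with constant `C h⁻¹`, where `C` depends only on the bound `C₂` on
`g`, the bound `C₃` on `K`, and the polynomial order `p` (not on `h` or `y`). -/
theorem equivalent_kernel_lipschitz_in_data
    (p : ℕ) (C₂ C₃ : ℝ) (hC₂ : 0 ≤ C₂) (hC₃ : 0 ≤ C₃) :
    ∃ C : ℝ, 0 ≤ C ∧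
      ∀ (h y : ℝ), 0 < h →
      ∀ (𝒴 : Set ℝ), MeasurableSet 𝒴 →
      ∀ (g K : ℝ → ℝ),
        (∀ u, 0 ≤ g u) → (∀ u, g u ≤ C₂) → Measurable g →
        (∀ v, |K v| ≤ C₃) → (∀ v, v ∉ Set.Icc (-1 : ℝ) 1 → K v = 0) → Measurable K →
      ∀ (D : Set ℝ), D = {v : ℝ | y + h * v ∈ 𝒴} →
      ∀ (pv : ℝ → Fin (p + 1) → ℝ),
        pv = (fun (v : ℝ) (j : Fin (p + 1)) => v ^ (j : ℕ) / (Nat.factorial j)) →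
      ∀ (I : ℝ → Fin (p + 1) → ℝ),
        I = (fun (a : ℝ) (i : Fin (p + 1)) =>
          ∫ v in D, (if a ≤ y + h * v then (1 : ℝ) else 0) * pv v i * K v * g (y + h * v)) →
      ∀ a a' : ℝ, ∀ i : Fin (p + 1), |I a i - I a' i| ≤ C / h * |a - a'| := by
  refine ⟨C₂ * C₃, mul_nonneg hC₂ hC₃, ?_⟩
  rintro h y hh 𝒴 - g K hg₀ hgC₂ hg_meas hK hK_supp hK_meas D - pv rfl I rfl a a' i
  set φ : ℝ → ℝ := fun v => v ^ (i : ℕ) / (i : ℕ).factorial * K v * g (y + h * v)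
  have hφ_bound : ∀ v, |φ v| ≤ C₂ * C₃ :=
    abs_pow_div_factorial_mul_mul_le (fun _ => (abs_of_nonneg (hg₀ _)).trans_le (hgC₂ _))
      hK hK_supp i
  have hφ_int : Integrable φ :=
    (Measure.integrableOn_of_bounded (s := Set.Icc (-1) 1) measure_Icc_lt_top.ne
      (by fun_prop) (ae_of_all _ hφ_bound)).integrable_of_forall_notMem_eq_zero
      fun v hv => by simp only [φ, hK_supp v hv, mul_zero, zero_mul]
  have hI := abs_setIntegral_ite_mul_sub_le (D := D) (y := y) hh hφ_int.integrableOn hφ_bound a a'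
  simp only [φ, mul_assoc] at hI ⊢
  exact hI
end
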